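/- Let H > 1 and 0 < 2HK ≤ 1, and let R_{H,K}(s,t) = 2^{−K}((t^{2H} + s^{2H})^K − |t−s|^{2HK}). Then for all fixed s,t ≥ 0, the rescaled incremental covariance 2^{K−1}·(R_{H,K}(T+t, T+s) − R_{H,K}(T+t, T) − R_{H,K}(T, T+s) + R_{H,K}(T,T)) converges, as T → ∞, to the fractional Brownian motion covariance S_{HK}(s,t) = (1/2)(s^{2HK} + t^{2HK} − |t−s|^{2HK}). -/

import Mathlib

open Filter

/-- The bifractional Brownian motion covariance kernel. -/
noncomputable def Rbif (H K s t : ℝ) : ℝ :=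
  (2 : ℝ) ^ (-K) * ((t ^ (2 * H) + s ^ (2 * H)) ^ K - |t - s| ^ (2 * H * K))

/-- The fractional Brownian motion covariance with Hurst parameter `γ`. -/
noncomputable def Sfbm (γ s t : ℝ) : ℝ :=
  (1 / 2) * (s ^ (2 * γ) + t ^ (2 * γ) - |t - s| ^ (2 * γ))

/-!
The term `-|t - s| ^ (2HK)` of `Rbif` alone produces the fractional Brownian covariance
`Sfbm (HK) s t` in the increment. The remaining term `(t ^ (2H) + s ^ (2H)) ^ K` is
homogeneous of degree `2HK`, so its rectangular increment at time `T` is `T ^ (2HK) ψ(1 / T)`,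
where `ψ` is the increment at time `1` with lags scaled by `ε = 1 / T`. Being a mixed
difference, `ψ` vanishes to first order at `0`: `ψ(ε) = o(ε)`. Since `2HK ≤ 1`,
`T ^ (2HK) ψ(1 / T) = T ^ (2HK - 1) · o(1) → 0`.
-/

open Real Topology

noncomputable def mixedDiff (φ p q : ℝ → ℝ) (ε : ℝ) : ℝ :=
  φ (p ε + q ε) - φ (p ε + q 0) - φ (p 0 + q ε) + φ (p 0 + q 0)

theorem mixedDiff_zero (φ p q : ℝ → ℝ) : mixedDiff φ p q 0 = 0 := by
  simp [mixedDiff]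

theorem hasDerivAt_mixedDiff {φ p q : ℝ → ℝ} {φ' p' q' : ℝ}
    (hφ : HasDerivAt φ φ' (p 0 + q 0)) (hp : HasDerivAt p p' 0) (hq : HasDerivAt q q' 0) :
    HasDerivAt (mixedDiff φ p q) 0 0 := by
  have hpq : HasDerivAt (fun ε => φ (p ε + q ε)) (φ' * (p' + q')) 0 :=
    hφ.comp 0 (hp.add hq)
  have hp0 : HasDerivAt (fun ε => φ (p ε + q 0)) (φ' * p') 0 :=
    hφ.comp 0 (hp.add_const _)
  have hq0 : HasDerivAt (fun ε => φ (p 0 + q ε)) (φ' * q') 0 :=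
    hφ.comp 0 (hq.const_add _)
  have h := ((hpq.sub hp0).sub hq0).add_const (φ (p 0 + q 0))
  rwa [show φ' * (p' + q') - φ' * p' - φ' * q' = 0 by ring] at h

theorem tendsto_rpow_mul_comp_inv_of_hasDerivAt_zero {f : ℝ → ℝ} {α : ℝ} (hα : α ≤ 1)
    (hf0 : f 0 = 0) (hf : HasDerivAt f 0 0) :
    Tendsto (fun T => T ^ α * f T⁻¹) atTop (𝓝 0) := by
  have hslope : Tendsto (fun ε => ε⁻¹ * f ε) (𝓝[≠] 0) (𝓝 0) := by
    simpa [hf0] using hasDerivAt_iff_tendsto_slope_zero.mp hf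
  have hinv : Tendsto (fun T : ℝ => T⁻¹) atTop (𝓝[≠] 0) :=
    tendsto_inv_atTop_nhdsGT_zero.mono_right (nhdsWithin_mono _ fun _ h => ne_of_gt h)
  have hlin : Tendsto (fun T : ℝ => T * f T⁻¹) atTop (𝓝 0) := by
    simpa [Function.comp_def] using hslope.comp hinv
  have hbdd : IsBoundedUnder (· ≤ ·) atTop (fun T : ℝ => ‖T ^ (α - 1)‖) := by
    refine isBoundedUnder_of_eventually_le (a := 1) ?_
    filter_upwards [eventually_ge_atTop 1] with T hT
    rw [norm_of_nonneg (rpow_nonneg (by linarith) _)]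
    exact rpow_le_one_of_one_le_of_nonpos hT (by linarith)
  refine (hlin.zero_mul_isBoundedUnder_le hbdd).congr' ?_
  filter_upwards [eventually_gt_atTop 0] with T hT
  rw [show α = 1 + (α - 1) by ring, rpow_add hT, rpow_one]
  ring_nf

theorem mul_rpow_add_mul_rpow_rpow {H K T x y : ℝ} (hT : 0 ≤ T) (hx : 0 ≤ x) (hy : 0 ≤ y) :
    ((T * x) ^ (2 * H) + (T * y) ^ (2 * H)) ^ K =
      T ^ (2 * H * K) * (x ^ (2 * H) + y ^ (2 * H)) ^ K := by
  rw [mul_rpow hT hx, mul_rpow hT hy, ← mul_add,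
    mul_rpow (rpow_nonneg hT _) (by positivity), ← rpow_mul hT]

/-- The increment of the `(t ^ (2H) + s ^ (2H)) ^ K` part of `Rbif` at time `1`,
with lags `s ε` and `t ε`. -/
noncomputable def Rbif_powerPart (H K s t : ℝ) : ℝ → ℝ :=
  mixedDiff (· ^ K) (fun ε => (1 + s * ε) ^ (2 * H)) (fun ε => (1 + t * ε) ^ (2 * H))

theorem hasDerivAt_Rbif_powerPart (H K s t : ℝ) : HasDerivAt (Rbif_powerPart H K s t) 0 0 := by
  have hpath : ∀ c : ℝ, HasDerivAt (fun ε => (1 + c * ε) ^ (2 * H)) (2 * H * c) 0 := by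
    intro c
    convert (((hasDerivAt_id' (0 : ℝ)).const_mul c).const_add 1).rpow_const (p := 2 * H)
      (Or.inl (by simp)) using 1
    simp only [mul_zero, add_zero, one_rpow]
    ring
  refine hasDerivAt_mixedDiff (φ' := K * 2 ^ (K - 1)) ?_ (hpath s) (hpath t)
  have hbase : (1 + s * 0) ^ (2 * H) + (1 + t * 0) ^ (2 * H) = (2 : ℝ) := by norm_num
  rw [hbase]
  exact hasDerivAt_rpow_const (p := K) (Or.inl two_ne_zero)

theorem Rbif_increment_eq {H K s t T : ℝ} (hHK : 0 < 2 * H * K) (hs : 0 ≤ s) (ht : 0 ≤ t)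
    (hT : 0 < T) :
    Rbif H K (T + t) (T + s) - Rbif H K (T + t) T - Rbif H K T (T + s) + Rbif H K T T =
      2 ^ (-K) * (T ^ (2 * H * K) * Rbif_powerPart H K s t T⁻¹ + 2 * Sfbm (H * K) s t) := by
  set α := 2 * H * K
  have hscale : ∀ c, T + c = T * (1 + c * T⁻¹) := fun c => by field_simp
  have hpow : ∀ {x y : ℝ}, 0 ≤ x → 0 ≤ y →
      ((T * x) ^ (2 * H) + (T * y) ^ (2 * H)) ^ K = T ^ α * (x ^ (2 * H) + y ^ (2 * H)) ^ K :=
    mul_rpow_add_mul_rpow_rpow hT.le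
  have hs' : 0 ≤ 1 + s * T⁻¹ := by positivity
  have ht' : 0 ≤ 1 + t * T⁻¹ := by positivity
  have hpow_st := hpow hs' ht'
  have hpow_1t := hpow zero_le_one ht'
  have hpow_s1 := hpow hs' zero_le_one
  have hpow_11 := hpow zero_le_one zero_le_one
  simp only [← hscale, mul_one, one_rpow] at hpow_st hpow_1t hpow_s1 hpow_11
  have habs_st : |T + s - (T + t)| = |t - s| := by rw [abs_sub_comm]; congr 1; ring
  have habs_t : |T - (T + t)| = t := by rw [abs_sub_comm, add_sub_cancel_left, abs_of_nonneg ht]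
  have habs_s : |T + s - T| = s := by rw [add_sub_cancel_left, abs_of_nonneg hs]
  have habs_0 : |T - T| ^ α = 0 := by rw [sub_self, abs_zero, zero_rpow hHK.ne']
  simp only [Rbif, Rbif_powerPart, mixedDiff, Sfbm, mul_zero, add_zero, one_rpow, ← mul_assoc]
  rw [hpow_st, hpow_1t, hpow_s1, hpow_11, habs_st, habs_t, habs_s, habs_0]
  ring

theorem Rbif_increments_tendsto_fbm_general (H K : ℝ)
    (hHK0 : 0 < 2 * H * K) (hHK1 : 2 * H * K ≤ 1)
    (s t : ℝ) (hs : 0 ≤ s) (ht : 0 ≤ t) :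
    Tendsto
      (fun T : ℝ => (2 : ℝ) ^ (K - 1) *
        (Rbif H K (T + t) (T + s) - Rbif H K (T + t) T -
          Rbif H K T (T + s) + Rbif H K T T))
      atTop (nhds (Sfbm (H * K) s t)) := by
  have hpower : Tendsto (fun T => T ^ (2 * H * K) * Rbif_powerPart H K s t T⁻¹) atTop (𝓝 0) :=
    tendsto_rpow_mul_comp_inv_of_hasDerivAt_zero hHK1 (mixedDiff_zero _ _ _)
      (hasDerivAt_Rbif_powerPart H K s t)
  have hlim := (hpower.const_mul 2⁻¹).const_add (Sfbm (H * K) s t)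
  rw [mul_zero, add_zero] at hlim
  have hhalf : (2 : ℝ) ^ (K - 1) * 2 ^ (-K) = 2⁻¹ := by
    rw [← rpow_add two_pos, show K - 1 + -K = -1 by ring, rpow_neg_one]
  refine hlim.congr' ?_
  filter_upwards [eventually_gt_atTop 0] with T hT
  rw [Rbif_increment_eq hHK0 hs ht hT, ← mul_assoc ((2 : ℝ) ^ (K - 1)), hhalf]
  ring

/-- For `H > 1`, `0 < 2HK ≤ 1`, the rescaled incremental covariance of the
bifractional Brownian motion converges, as `T → ∞`, to the fractional Brownian
motion covariance with Hurst parameter `HK`. -/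
theorem Rbif_increments_tendsto_fbm (H K : ℝ) (hH : 1 < H)
    (hHK0 : 0 < 2 * H * K) (hHK1 : 2 * H * K ≤ 1)
    (s t : ℝ) (hs : 0 ≤ s) (ht : 0 ≤ t) :
    Tendsto
      (fun T : ℝ => (2 : ℝ) ^ (K - 1) *
        (Rbif H K (T + t) (T + s) - Rbif H K (T + t) T -
          Rbif H K T (T + s) + Rbif H K T T))
      atTop (nhds (Sfbm (H * K) s t)) :=
  Rbif_increments_tendsto_fbm_general H K hHK0 hHK1 s t hs ht
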